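/- For every δ ∈ (0,1) and every function F : {0,1}^n → {0,1}^m, there exists a Santha-Vazirani source X with bias δ such that the min-entropy of F(X) is at most m · log₂(2/(1+δ)). In other words, no non-trivial deterministic min-entropy condenser exists for SV_δ sources. -/

import Mathlib

open Finset

/-- `μ` is a probability distribution on the finite type `A`. -/
def IsDist {A : Type*} [Fintype A] (μ : A → ℝ) : Prop :=
  (∀ a, 0 ≤ μ a) ∧ ∑ a, μ a = 1

open Classical in
/-- Probability of an event under a distribution on a finite type. -/
noncomputable def Pr {A : Type*} [Fintype A] (μ : A → ℝ) (p : A → Prop) : ℝ :=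
  ∑ a, if p a then μ a else 0

/-- `μ` is a Santha-Vazirani distribution with bias `δ`: for every bit `i` and every
prefix `z` of positive probability, `P[Xᵢ = 1 | prefix] ∈ [(1−δ)/2, (1+δ)/2]`. -/
def IsSV {n : ℕ} (δ : ℝ) (μ : (Fin n → Bool) → ℝ) : Prop :=
  ∀ (i : Fin n) (z : Fin n → Bool),
    0 < Pr μ (fun x => ∀ j, j < i → x j = z j) →
      (1 - δ) / 2 * Pr μ (fun x => ∀ j, j < i → x j = z j)
          ≤ Pr μ (fun x => x i = true ∧ ∀ j, j < i → x j = z j) ∧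
        Pr μ (fun x => x i = true ∧ ∀ j, j < i → x j = z j)
          ≤ (1 + δ) / 2 * Pr μ (fun x => ∀ j, j < i → x j = z j)

/-!
Pigeonhole gives an output value `s` whose fiber `T = F⁻¹(s)` has density at least `2^{-m}`.
The source walks down the binary tree, at each node choosing the half of `T` with more elements
with probability `p = (1+δ)/2`; this is an SV source with bias `δ`. Writing `p = (1/2)^c` with
`0 < c ≤ 1`, induction on `n` gives `P[X ∈ T] ≥ density(T)^c`, the step being the inequality
`((x+y)/2)^c ≤ p x^c + (1-p) y^c` for `x ≥ y ≥ 0`, which follows from the concavity of `t ↦ t^c`.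
Hence `P[F(X) = s] ≥ (2^{-m})^c = p^m`.
-/

lemma ConcaveOn.map_add_sub_map_le_of_le {s : Set ℝ} {f : ℝ → ℝ} (hf : ConcaveOn ℝ s f)
    {a b d : ℝ} (ha : a ∈ s) (hbd : b + d ∈ s) (hab : a ≤ b) (hd : 0 ≤ d) :
    f (b + d) - f b ≤ f (a + d) - f a := by
  rcases hd.eq_or_lt with rfl | hd
  · simp
  rcases hab.eq_or_lt with rfl | hab
  · rfl
  have hmem : ∀ t ∈ Set.Icc a (b + d), t ∈ s := fun t ht =>
    hf.1.ordConnected.out ha hbd ht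
  have h1 : slope f a (b + d) ≤ slope f a (a + d) :=
    hf.slope_anti ha ⟨hmem _ ⟨by linarith, by linarith⟩, by simp; linarith⟩
      ⟨hbd, by simp; linarith⟩ (by linarith)
  have h2 : slope f (b + d) b ≤ slope f (b + d) a :=
    hf.slope_anti hbd ⟨ha, by simp; linarith⟩ ⟨hmem _ ⟨hab.le, by linarith⟩, by simp; linarith⟩
      hab.le
  have key := h2.trans (slope_comm f a (b + d) ▸ h1)
  rwa [slope_def_field, slope_def_field, add_sub_cancel_left, sub_add_cancel_left, div_neg,
    ← neg_div, neg_sub, div_le_div_iff_of_pos_right hd] at key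

lemma rpow_midpoint_le {c p x y : ℝ} (hc0 : 0 ≤ c) (hc1 : c ≤ 1) (hp : (1 / 2 : ℝ) ^ c = p)
    (hy : 0 ≤ y) (hyx : y ≤ x) :
    ((x + y) / 2) ^ c ≤ p * x ^ c + (1 - p) * y ^ c := by
  have hx : 0 ≤ x := hy.trans hyx
  have hinc : (x + y) ^ c - x ^ c ≤ (y + y) ^ c - y ^ c :=
    (Real.concaveOn_rpow hc0 hc1).map_add_sub_map_le_of_le hy (by simp; positivity) hyx hy
  have htwo : (y + y) ^ c = 2 ^ c * y ^ c := by
    rw [← two_mul, Real.mul_rpow zero_le_two hy]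
  have hp2 : p * 2 ^ c = 1 := by
    rw [← hp, ← Real.mul_rpow (by norm_num) zero_le_two]; norm_num
  calc ((x + y) / 2) ^ c = p * (x + y) ^ c := by
        rw [div_eq_mul_one_div, Real.mul_rpow (by positivity) (by norm_num), hp, mul_comm]
    _ ≤ p * (x ^ c + (2 ^ c - 1) * y ^ c) := by
        gcongr
        · rw [← hp]; positivity
        · linarith
    _ = p * x ^ c + (1 - p) * y ^ c := by linear_combination y ^ c * hp2

section Pr

variable {A : Type*} [Fintype A] (μ : A → ℝ)

lemma Pr_congr {P Q : A → Prop} (h : ∀ a, P a ↔ Q a) : Pr μ P = Pr μ Q := by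
  rw [funext fun a => propext (h a)]

lemma Pr_true : Pr μ (fun _ => True) = ∑ a, μ a := by
  simp [Pr]

lemma Pr_const_and (q : Prop) [Decidable q] (P : A → Prop) :
    Pr μ (fun a => q ∧ P a) = if q then Pr μ P else 0 := by
  by_cases hq : q
  · simp only [hq, true_and, if_true]
  · simp [Pr, hq]

lemma Pr_const_mul (r : ℝ) (P : A → Prop) : Pr (fun a => r * μ a) P = r * Pr μ P := by
  simp only [Pr, mul_sum, mul_ite, mul_zero]

lemma Pr_one_mem (S : Finset A) : Pr (fun _ => (1 : ℝ)) (· ∈ S) = #S := by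
  simp [Pr]

lemma Pr_cons_eq_sum {α : Type*} [Fintype α] {n : ℕ} (μ : (Fin (n + 1) → α) → ℝ)
    (P : (Fin (n + 1) → α) → Prop) :
    Pr μ P = ∑ b, Pr (fun y => μ (Fin.cons b y)) (fun y => P (Fin.cons b y)) := by
  simp only [Pr]
  rw [← Fintype.sum_prod_type', ← (Fin.consEquiv fun _ => α).sum_comp]
  rfl

end Pr

section GreedySource

variable {n : ℕ}

def headFiber (S : Finset (Fin (n + 1) → Bool)) (b : Bool) : Finset (Fin n → Bool) :=
  {y | Fin.cons b y ∈ S}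

@[simp]
lemma mem_headFiber {S : Finset (Fin (n + 1) → Bool)} {b : Bool} {y : Fin n → Bool} :
    y ∈ headFiber S b ↔ Fin.cons b y ∈ S := by
  simp [headFiber]

def majorityBit (S : Finset (Fin (n + 1) → Bool)) : Bool :=
  decide (#(headFiber S false) ≤ #(headFiber S true))

lemma card_headFiber_not_majorityBit_le (S : Finset (Fin (n + 1) → Bool)) :
    #(headFiber S !(majorityBit S)) ≤ #(headFiber S (majorityBit S)) := by
  unfold majorityBit
  by_cases h : #(headFiber S false) ≤ #(headFiber S true) <;> simp [h]; omega

lemma card_eq_card_headFiber_add_card_headFiber (S : Finset (Fin (n + 1) → Bool)) (b : Bool) :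
    #S = #(headFiber S b) + #(headFiber S !b) := by
  have h := Pr_cons_eq_sum (fun _ => (1 : ℝ)) (· ∈ S)
  simp only [← mem_headFiber, Pr_one_mem, Fintype.sum_bool] at h
  have h' : #S = #(headFiber S true) + #(headFiber S false) := by exact_mod_cast h
  cases b <;> simp only [h', Bool.not_false, Bool.not_true, Nat.add_comm]

noncomputable def greedySource (p : ℝ) : (n : ℕ) → Finset (Fin n → Bool) → (Fin n → Bool) → ℝ
  | 0, _, _ => 1
  | n + 1, S, x =>
    (if x 0 = majorityBit S then p else 1 - p) * greedySource p n (headFiber S (x 0)) (Fin.tail x)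

variable {p : ℝ}

lemma greedySource_nonneg (hp0 : 0 ≤ p) (hp1 : p ≤ 1) :
    ∀ {n} (S : Finset (Fin n → Bool)) (x : Fin n → Bool), 0 ≤ greedySource p n S x
  | 0, _, _ => zero_le_one
  | _ + 1, _, _ => mul_nonneg (by split <;> linarith) (greedySource_nonneg hp0 hp1 _ _)

lemma Pr_greedySource_succ (S : Finset (Fin (n + 1) → Bool)) (P : (Fin (n + 1) → Bool) → Prop) :
    Pr (greedySource p (n + 1) S) P =
      ∑ b, (if b = majorityBit S then p else 1 - p) *
        Pr (greedySource p n (headFiber S b)) (fun y => P (Fin.cons b y)) := by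
  rw [Pr_cons_eq_sum]
  simp only [greedySource, Fin.cons_zero, Fin.tail_cons, Pr_const_mul]

lemma Pr_greedySource_head (S : Finset (Fin (n + 1) → Bool)) (b : Bool)
    (Q : (Fin n → Bool) → Prop) :
    Pr (greedySource p (n + 1) S) (fun x => x 0 = b ∧ Q (Fin.tail x)) =
      (if b = majorityBit S then p else 1 - p) * Pr (greedySource p n (headFiber S b)) Q := by
  simp only [Pr_greedySource_succ, Fin.cons_zero, Fin.tail_cons, Pr_const_and, mul_ite, mul_zero,
    sum_ite_eq', mem_univ, if_true]

lemma sum_greedySource : ∀ {n} (S : Finset (Fin n → Bool)), ∑ x, greedySource p n S x = 1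
  | 0, _ => by simp [greedySource]
  | _ + 1, S => by
    rw [← Pr_true, Pr_greedySource_succ]
    simp only [Pr_true, sum_greedySource, mul_one, Fintype.sum_bool]
    cases majorityBit S <;> simp

lemma Pr_greedySource_mem (S : Finset (Fin (n + 1) → Bool)) :
    Pr (greedySource p (n + 1) S) (· ∈ S) =
      p * Pr (greedySource p n (headFiber S (majorityBit S)))
          (· ∈ headFiber S (majorityBit S)) +
        (1 - p) * Pr (greedySource p n (headFiber S !(majorityBit S)))
          (· ∈ headFiber S !(majorityBit S)) := by
  simp only [Pr_greedySource_succ, ← mem_headFiber, Fintype.sum_bool]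
  cases majorityBit S <;> simp; ring

end GreedySource

lemma prefix_succ_iff {α : Type*} {n : ℕ} {x z : Fin (n + 1) → α} {i : Fin n} :
    (∀ j, j < i.succ → x j = z j) ↔ x 0 = z 0 ∧ ∀ j, j < i → Fin.tail x j = Fin.tail z j := by
  simp [Fin.forall_fin_succ, Fin.succ_pos, Fin.succ_lt_succ_iff, Fin.tail]

lemma Pr_greedySource_bit_and_prefix_eq_mul {p : ℝ} :
    ∀ {n} (S : Finset (Fin n → Bool)) (i : Fin n) (z : Fin n → Bool),
      ∃ w, (w = p ∨ w = 1 - p) ∧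
        Pr (greedySource p n S) (fun x => x i = true ∧ ∀ j, j < i → x j = z j) =
          w * Pr (greedySource p n S) (fun x => ∀ j, j < i → x j = z j)
  | 0, _, i, _ => i.elim0
  | n + 1, S, i, z => by
    induction i using Fin.cases with
    | zero =>
      refine ⟨if true = majorityBit S then p else 1 - p, by split <;> simp, ?_⟩
      have hnum := Pr_greedySource_head (p := p) S true (fun _ => True)
      simp only [and_true, Pr_true, sum_greedySource, mul_one] at hnum
      simp [hnum, Pr_true, sum_greedySource]
    | succ i =>
      obtain ⟨w, hw, hrec⟩ := Pr_greedySource_bit_and_prefix_eq_mul (headFiber S (z 0)) i (Fin.tail z)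
      refine ⟨w, hw, ?_⟩
      have hnum := Pr_greedySource_head (p := p) S (z 0)
        (fun y => y i = true ∧ ∀ j, j < i → y j = Fin.tail z j)
      have hden := Pr_greedySource_head (p := p) S (z 0)
        (fun y => ∀ j, j < i → y j = Fin.tail z j)
      simp only [Fin.tail] at hnum hden hrec
      simp only [prefix_succ_iff, Fin.tail]
      rw [Pr_congr _ fun x => and_left_comm, hnum, hden, hrec, mul_left_comm]

lemma isSV_greedySource {δ : ℝ} (hδ : 0 ≤ δ) {n : ℕ} (S : Finset (Fin n → Bool)) :
    IsSV δ (greedySource ((1 + δ) / 2) n S) := by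
  intro i z hpos
  obtain ⟨w, hw, heq⟩ := Pr_greedySource_bit_and_prefix_eq_mul (p := (1 + δ) / 2) S i z
  have hw' : (1 - δ) / 2 ≤ w ∧ w ≤ (1 + δ) / 2 := by
    rcases hw with rfl | rfl <;> constructor <;> linarith
  rw [heq]
  exact ⟨by gcongr; exact hw'.1, by gcongr; exact hw'.2⟩

lemma rpow_density_le_Pr_greedySource {c p : ℝ} (hc0 : 0 < c) (hc1 : c ≤ 1)
    (hp : (1 / 2 : ℝ) ^ c = p) :
    ∀ {n} (S : Finset (Fin n → Bool)),
      ((#S : ℝ) / 2 ^ n) ^ c ≤ Pr (greedySource p n S) (· ∈ S)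
  | 0, S => by
    have hS : #S = 0 ∨ #S = 1 := by
      have := card_le_univ S
      simp only [Fintype.card_pi, Fintype.card_bool, prod_const, card_univ, Fintype.card_fin,
        pow_zero] at this
      omega
    have hPr : Pr (greedySource p 0 S) (· ∈ S) = #S := Pr_one_mem S
    rcases hS with hS | hS <;> simp [hPr, hS, Real.zero_rpow hc0.ne']
  | n + 1, S => by
    rw [Pr_greedySource_mem]
    set m := majorityBit S
    have hp0 : 0 ≤ p := hp ▸ by positivity
    have hp1 : p ≤ 1 := hp ▸ Real.rpow_le_one (by norm_num) (by norm_num) hc0.le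
    have hdensity : (#S : ℝ) / 2 ^ (n + 1) =
        ((#(headFiber S m) : ℝ) / 2 ^ n + (#(headFiber S !m) : ℝ) / 2 ^ n) / 2 := by
      rw [card_eq_card_headFiber_add_card_headFiber S m, pow_succ]; push_cast; ring
    have hminor : (#(headFiber S !m) : ℝ) / 2 ^ n ≤ (#(headFiber S m) : ℝ) / 2 ^ n := by
      gcongr ?_ / _
      exact_mod_cast card_headFiber_not_majorityBit_le S
    rw [hdensity]
    calc _ ≤ p * ((#(headFiber S m) : ℝ) / 2 ^ n) ^ c +
          (1 - p) * ((#(headFiber S !m) : ℝ) / 2 ^ n) ^ c :=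
          rpow_midpoint_le hc0.le hc1 hp (by positivity) hminor
      _ ≤ _ := add_le_add
          (mul_le_mul_of_nonneg_left (rpow_density_le_Pr_greedySource hc0 hc1 hp _) hp0)
          (mul_le_mul_of_nonneg_left (rpow_density_le_Pr_greedySource hc0 hc1 hp _)
            (by linarith))

lemma exists_half_rpow_eq {p : ℝ} (hp : 1 / 2 ≤ p) (hp1 : p < 1) :
    ∃ c : ℝ, 0 < c ∧ c ≤ 1 ∧ (1 / 2 : ℝ) ^ c = p := by
  have hlog2 : Real.log (1 / 2) < 0 := Real.log_neg (by norm_num) (by norm_num)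
  refine ⟨Real.logb (1 / 2) p, ?_, ?_, Real.rpow_logb (by norm_num) (by norm_num) (by linarith)⟩
  · exact div_pos_of_neg_of_neg (Real.log_neg (by linarith) hp1) hlog2
  · rw [Real.logb, div_le_one_of_neg hlog2]
    exact Real.log_le_log (by norm_num) hp

theorem no_sv_condenser {n m : ℕ} (δ : ℝ) (hδ0 : 0 < δ) (hδ1 : δ < 1)
    (F : (Fin n → Bool) → (Fin m → Bool)) :
    ∃ μ : (Fin n → Bool) → ℝ, IsDist μ ∧ IsSV δ μ ∧
      ∃ s : Fin m → Bool, ((1 + δ) / 2) ^ m ≤ Pr μ (fun x => F x = s) := by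
  obtain ⟨c, hc0, hc1, hpc⟩ := exists_half_rpow_eq (p := (1 + δ) / 2) (by linarith) (by linarith)
  obtain ⟨s, hs⟩ := Fintype.exists_le_card_fiber_of_nsmul_le_card F
    (b := (2 : ℝ) ^ n / 2 ^ m) (by simp [mul_div_cancel₀])
  set T : Finset (Fin n → Bool) := {x | F x = s}
  have hT : (1 / 2 : ℝ) ^ m ≤ (#T : ℝ) / 2 ^ n := by
    rw [le_div_iff₀ (by positivity)]
    calc _ = (2 : ℝ) ^ n / 2 ^ m := by rw [one_div_pow, one_div_mul_eq_div]
      _ ≤ _ := hs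
  refine ⟨greedySource ((1 + δ) / 2) n T,
    ⟨greedySource_nonneg (by linarith) (by linarith) T, sum_greedySource T⟩,
    isSV_greedySource hδ0.le T, s, ?_⟩
  calc ((1 + δ) / 2) ^ m = ((1 / 2 : ℝ) ^ m) ^ c := by
        rw [← hpc, ← Real.rpow_natCast, ← Real.rpow_natCast, ← Real.rpow_mul (by norm_num),
          ← Real.rpow_mul (by norm_num), mul_comm]
    _ ≤ ((#T : ℝ) / 2 ^ n) ^ c := by gcongr
    _ ≤ Pr (greedySource ((1 + δ) / 2) n T) (· ∈ T) :=
        rpow_density_le_Pr_greedySource hc0 hc1 hpc T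
    _ = _ := Pr_congr _ fun x => by simp [T]
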